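/- Let φ₀ : ℝ → ℝ be differentiable on ℝ with φ₀' differentiable at x₀, and assume φ₀''(x₀) < 0. Let f₀ = exp ∘ φ₀ and, for r > 0, define φ_r(y) = exp(−φ₀(y)/r). Then as r → ∞, (r·f₀(x₀)³·|φ_r''(x₀)| / (φ_r(x₀)·24))^{1/5} converges to (f₀(x₀)³·|φ₀''(x₀)| / 24)^{1/5}, and (r³·f₀(x₀)⁴·|φ_r''(x₀)|³ / (φ_r(x₀)³·24³))^{1/5} converges to (f₀(x₀)⁴·|φ₀''(x₀)|³ / 24³)^{1/5}. -/

import Mathlib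

open Filter Topology

theorem deriv_deriv_exp_neg_div (φ : ℝ → ℝ) (x r : ℝ)
    (hd : Differentiable ℝ φ) (hd2 : DifferentiableAt ℝ (deriv φ) x) :
    deriv (deriv fun y => Real.exp (-φ y / r)) x =
      Real.exp (-φ x / r) * (deriv φ x ^ 2 / r ^ 2 - deriv (deriv φ) x / r) := by
  have hfirst : ∀ y, HasDerivAt (fun y => Real.exp (-φ y / r))
      (Real.exp (-φ y / r) * (-deriv φ y / r)) y := fun y =>
    ((hd y).hasDerivAt.neg.div_const r).exp
  have hsecond : HasDerivAt (fun y => Real.exp (-φ y / r) * (-deriv φ y / r))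
      (Real.exp (-φ x / r) * (-deriv φ x / r) * (-deriv φ x / r) +
        Real.exp (-φ x / r) * (-deriv (deriv φ) x / r)) x :=
    (hfirst x).mul (hd2.hasDerivAt.neg.div_const r)
  rw [funext fun y => (hfirst y).deriv, hsecond.deriv]
  ring

theorem mul_abs_deriv_deriv_exp_neg_div (φ : ℝ → ℝ) (x : ℝ) {r : ℝ} (hr : 0 < r)
    (hd : Differentiable ℝ φ) (hd2 : DifferentiableAt ℝ (deriv φ) x) :
    r * |deriv (deriv fun y => Real.exp (-φ y / r)) x| / Real.exp (-φ x / r) =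
      |deriv φ x ^ 2 / r - deriv (deriv φ) x| := by
  have hscale : deriv φ x ^ 2 / r - deriv (deriv φ) x =
      r * (deriv φ x ^ 2 / r ^ 2 - deriv (deriv φ) x / r) := by
    field_simp
  have hE := Real.exp_pos (-φ x / r)
  rw [deriv_deriv_exp_neg_div φ x r hd hd2, hscale, abs_mul, abs_mul, abs_of_pos hE,
    abs_of_pos hr]
  field_simp

theorem tendsto_mul_abs_deriv_deriv_exp_neg_div (φ : ℝ → ℝ) (x : ℝ)
    (hd : Differentiable ℝ φ) (hd2 : DifferentiableAt ℝ (deriv φ) x) :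
    Tendsto (fun r => r * |deriv (deriv fun y => Real.exp (-φ y / r)) x| / Real.exp (-φ x / r))
      atTop (𝓝 |deriv (deriv φ) x|) := by
  have hlim : Tendsto (fun r => |deriv φ x ^ 2 / r - deriv (deriv φ) x|) atTop
      (𝓝 |0 - deriv (deriv φ) x|) :=
    ((tendsto_const_nhds.div_atTop tendsto_id).sub tendsto_const_nhds).abs
  rw [zero_sub, abs_neg] at hlim
  refine hlim.congr' ?_
  filter_upwards [eventually_gt_atTop 0] with r hr
  exact (mul_abs_deriv_deriv_exp_neg_div φ x hr hd hd2).symm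

theorem sc_constants_tendsto_lc_general
    (φ₀ : ℝ → ℝ) (x₀ : ℝ)
    (hd : Differentiable ℝ φ₀) (hd2 : DifferentiableAt ℝ (deriv φ₀) x₀)
    (f₀ : ℝ → ℝ) :
    Tendsto
        (fun r : ℝ =>
          (r * f₀ x₀ ^ 3 *
              |deriv (deriv (fun y => Real.exp (-φ₀ y / r))) x₀| /
            (Real.exp (-φ₀ x₀ / r) * 24)) ^ ((1 : ℝ) / 5))
        atTop
        (nhds ((f₀ x₀ ^ 3 * |deriv (deriv φ₀) x₀| / 24) ^ ((1 : ℝ) / 5))) ∧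
      Tendsto
        (fun r : ℝ =>
          (r ^ 3 * f₀ x₀ ^ 4 *
              |deriv (deriv (fun y => Real.exp (-φ₀ y / r))) x₀| ^ 3 /
            (Real.exp (-φ₀ x₀ / r) ^ 3 * 24 ^ 3)) ^ ((1 : ℝ) / 5))
        atTop
        (nhds ((f₀ x₀ ^ 4 * |deriv (deriv φ₀) x₀| ^ 3 / 24 ^ 3) ^ ((1 : ℝ) / 5))) := by
  have hlim := tendsto_mul_abs_deriv_deriv_exp_neg_div φ₀ x₀ hd hd2
  have hexp : (0 : ℝ) ≤ 1 / 5 := by norm_num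
  constructor
  · refine (((hlim.const_mul (f₀ x₀ ^ 3)).div_const 24).rpow_const (Or.inr hexp)).congr
      fun r => ?_
    congr 1
    ring
  · refine ((((hlim.pow 3).const_mul (f₀ x₀ ^ 4)).div_const (24 ^ 3)).rpow_const
      (Or.inr hexp)).congr fun r => ?_
    congr 1
    ring

/-- As `r → ∞`, the s-concave constants `d^{(0)}_{2,sc}` and `d^{(1)}_{2,sc}` converge to
the log-concave constants `d^{(0)}_{2,lc}` and `d^{(1)}_{2,lc}`, respectively. -/
theorem sc_constants_tendsto_lc
    (φ₀ : ℝ → ℝ) (x₀ : ℝ)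
    (hd : Differentiable ℝ φ₀) (hd2 : DifferentiableAt ℝ (deriv φ₀) x₀)
    (hneg : deriv (deriv φ₀) x₀ < 0)
    (f₀ : ℝ → ℝ) (hf₀ : f₀ = fun y => Real.exp (φ₀ y)) :
    Tendsto
        (fun r : ℝ =>
          (r * f₀ x₀ ^ 3 *
              |deriv (deriv (fun y => Real.exp (-φ₀ y / r))) x₀| /
            (Real.exp (-φ₀ x₀ / r) * 24)) ^ ((1 : ℝ) / 5))
        atTop
        (nhds ((f₀ x₀ ^ 3 * |deriv (deriv φ₀) x₀| / 24) ^ ((1 : ℝ) / 5))) ∧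
      Tendsto
        (fun r : ℝ =>
          (r ^ 3 * f₀ x₀ ^ 4 *
              |deriv (deriv (fun y => Real.exp (-φ₀ y / r))) x₀| ^ 3 /
            (Real.exp (-φ₀ x₀ / r) ^ 3 * 24 ^ 3)) ^ ((1 : ℝ) / 5))
        atTop
        (nhds ((f₀ x₀ ^ 4 * |deriv (deriv φ₀) x₀| ^ 3 / 24 ^ 3) ^ ((1 : ℝ) / 5))) :=
  sc_constants_tendsto_lc_general φ₀ x₀ hd hd2 f₀
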